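/- For every positive integer n, (∏_{r=1}^{n} f(r))^{1023} ≤ (∏_{r=1}^{1023} h(r))^{n}; equivalently, ∏_{r=1}^{n} f(r) ≤ c^n for all n ≥ 1, where c = (∏_{r=1}^{1023} h(r))^{1/1023} = 4.01055487…. -/

import Mathlib

open Finset

/-- `g x = x` if `x` is an integer (for positive rationals: a positive integer), else `1`. -/
def g (x : ℚ) : ℚ := if x.den = 1 then x else 1

/-- `h r = r / (g(r/2) * g(r/4) * g(r/8) * ...)`; the product is finite since
`g (r / 2^i) = 1` for all `i > r`. -/
def h (r : ℕ) : ℚ := (r : ℚ) / ∏ i ∈ Finset.Icc 1 r, g ((r : ℚ) / 2 ^ i)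

/-- `f (2^k * ℓ) = ℓ^(1-k)` for `ℓ` odd, i.e. `f r = odd(r) ^ (1 - v₂(r))`. -/
def f (r : ℕ) : ℚ := (ordCompl[2] r : ℚ) ^ ((1 : ℤ) - padicValNat 2 r)

/-!
Write `P n = ∏_{r ≤ n} f r` and `s m` for the binary digit sum of `m`. Pairing `r = 2j - 1` with
`r = 2j` and using Legendre's formula `v₂(m!) = m - s m` gives `P (2m) · 2^{s m} = P m · C(2m, m)`,
and `P (2m + 1) = (2m + 1) · P (2m)`. Together with `(2m + 1) · C(2m, m)² ≤ 16^m`, an induction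
along `n ↦ ⌊n/2⌋` shows `P n ^ 4 ≤ 2^{8n - Q n}` for a positive quadratic `Q` in `⌊log₂ n⌋ - 2 s n`,
so `P n ≤ 4^n`.

On the other side, `g (r / 2^i) = r / 2^i` exactly when `2^i ∣ r`, so
`∏_{r ≤ N} h r = N! / ∏_{i ≥ 1} ⌊N / 2^i⌋!`, and for `N = 1023` this is at least `4^1023` by a
direct computation.
-/

open Nat

lemma f_eq_zpow (r : ℕ) : f r = ((r : ℚ) / 2 ^ padicValNat 2 r) ^ (1 - (padicValNat 2 r : ℤ)) := by
  rw [f, Nat.factorization_def _ Nat.prime_two]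

lemma f_nonneg (r : ℕ) : 0 ≤ f r := by rw [f_eq_zpow]; positivity

lemma f_two_mul_add_one (m : ℕ) : f (2 * m + 1) = 2 * m + 1 := by
  rw [f_eq_zpow, padicValNat.eq_zero_of_not_dvd (by omega)]
  norm_num

lemma f_two_mul_mul_oddPart {j : ℕ} (hj : j ≠ 0) :
    f (2 * j) * ((j : ℚ) / 2 ^ padicValNat 2 j) = f j := by
  have hv : padicValNat 2 (2 * j) = padicValNat 2 j + 1 := by
    rw [padicValNat.mul two_ne_zero hj, padicValNat_self, add_comm]
  have hodd : ((2 * j : ℕ) : ℚ) / 2 ^ (padicValNat 2 j + 1) = (j : ℚ) / 2 ^ padicValNat 2 j := by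
    push_cast; field_simp; ring
  rw [f_eq_zpow, f_eq_zpow, hv, hodd, ← zpow_add_one₀ (by positivity)]
  congr 1
  push_cast
  ring

lemma digits_two_sum_succ_add_padicValNat (m : ℕ) :
    (digits 2 (m + 1)).sum + padicValNat 2 (m + 1) = (digits 2 m).sum + 1 := by
  have legendre (n : ℕ) : padicValNat 2 n ! = n - (digits 2 n).sum := by
    simpa using sub_one_mul_padicValNat_factorial (p := 2) n
  have hfact : padicValNat 2 (m + 1)! = padicValNat 2 m ! + padicValNat 2 (m + 1) := by
    rw [Nat.factorial_succ, padicValNat.mul (by omega) (Nat.factorial_ne_zero m), add_comm]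
  rw [legendre, legendre] at hfact
  have := digit_sum_le 2 m
  have := digit_sum_le 2 (m + 1)
  omega

lemma prod_f_two_mul (m : ℕ) :
    (∏ r ∈ Icc 1 (2 * m), f r) * 2 ^ (digits 2 m).sum = (∏ r ∈ Icc 1 m, f r) * centralBinom m := by
  induction m with
  | zero => simp
  | succ m ih =>
    set v := padicValNat 2 (m + 1)
    have hsplit : ∏ r ∈ Icc 1 (2 * (m + 1)), f r
        = (∏ r ∈ Icc 1 (2 * m), f r) * (2 * m + 1) * f (2 * (m + 1)) := by
      rw [show 2 * (m + 1) = 2 * m + 1 + 1 by ring, prod_Icc_succ_top (by omega),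
        prod_Icc_succ_top (by omega), f_two_mul_add_one]
    have hdigits : (2 : ℚ) ^ (digits 2 (m + 1)).sum * 2 ^ v = 2 ^ (digits 2 m).sum * 2 := by
      rw [← pow_add, digits_two_sum_succ_add_padicValNat, pow_succ]
    have hbinom : ((m + 1 : ℕ) : ℚ) * centralBinom (m + 1) = 2 * (2 * m + 1) * centralBinom m := by
      exact_mod_cast succ_mul_centralBinom_succ m
    have hodd : ((m + 1 : ℕ) : ℚ) = 2 ^ v * (((m + 1 : ℕ) : ℚ) / 2 ^ v) := by field_simp
    rw [← mul_left_inj' (show ((m + 1 : ℕ) : ℚ) ≠ 0 by positivity)]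
    nth_rewrite 1 [hodd]
    calc _ = (∏ r ∈ Icc 1 (2 * m), f r) * 2 ^ (digits 2 m).sum * (2 * (2 * m + 1))
            * (f (2 * (m + 1)) * (((m + 1 : ℕ) : ℚ) / 2 ^ v)) := by
          rw [hsplit]
          linear_combination (∏ r ∈ Icc 1 (2 * m), f r) * (2 * m + 1) * f (2 * (m + 1))
            * (((m + 1 : ℕ) : ℚ) / 2 ^ v) * hdigits
      _ = _ := by
          rw [ih, f_two_mul_mul_oddPart (by omega), prod_Icc_succ_top (by omega)]
          linear_combination (∏ r ∈ Icc 1 m, f r) * f (m + 1) * hbinom.symm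

lemma two_mul_add_one_mul_centralBinom_sq_le (m : ℕ) :
    (2 * m + 1) * centralBinom m ^ 2 ≤ 16 ^ m := by
  induction m with
  | zero => simp
  | succ m ih =>
    refine Nat.le_of_mul_le_mul_left ?_ (by positivity : 0 < (m + 1) ^ 2)
    calc (m + 1) ^ 2 * ((2 * (m + 1) + 1) * centralBinom (m + 1) ^ 2)
        = (2 * m + 3) * ((m + 1) * centralBinom (m + 1)) ^ 2 := by ring
      _ = (2 * m + 3) * (2 * m + 1) * (4 * ((2 * m + 1) * centralBinom m ^ 2)) := by
          rw [succ_mul_centralBinom_succ]; ring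
      _ ≤ 4 * (m + 1) ^ 2 * (4 * 16 ^ m) :=
          Nat.mul_le_mul (by nlinarith) (Nat.mul_le_mul_left 4 ih)
      _ = (m + 1) ^ 2 * 16 ^ (m + 1) := by ring

lemma one_le_digits_two_sum {m : ℕ} (hm : m ≠ 0) : 1 ≤ (digits 2 m).sum := by
  have := sub_one_mul_padicValNat_factorial_lt_of_ne_zero (p := 2) hm
  have := sub_one_mul_padicValNat_factorial (p := 2) m
  omega

def logDigitGap (n : ℕ) : ℤ := Nat.log 2 n - 2 * (digits 2 n).sum

/-- With `u = logDigitGap`, the step `m ↦ 2m` sends `u ↦ u + 1` and raises `u² + 9u` by `2u + 10`;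
the step `m ↦ 2m + 1` sends `u ↦ u - 1` and lowers it by `2u + 8`. Both changes fit in the room
the two steps of the induction leave. The constant makes `slack 1 = 8` match the base case `P 1 = 1`. -/
def slack (n : ℕ) : ℤ := logDigitGap n ^ 2 + 9 * logDigitGap n + 22

lemma slack_pos (n : ℕ) : 0 < slack n := by
  unfold slack
  nlinarith [sq_nonneg (2 * logDigitGap n + 9)]

lemma logDigitGap_two_mul {m : ℕ} (hm : m ≠ 0) : logDigitGap (2 * m) = logDigitGap m + 1 := by
  have hlog : Nat.log 2 (2 * m) = Nat.log 2 m + 1 := by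
    rw [mul_comm, Nat.log_mul_base one_lt_two hm]
  have hdigits : digits 2 (2 * m) = 0 :: digits 2 m := by
    simpa using digits_add 2 one_lt_two 0 m two_pos (Or.inr hm)
  simp only [logDigitGap, hlog, hdigits, List.sum_cons]
  push_cast
  ring

lemma logDigitGap_two_mul_add_one {m : ℕ} (hm : m ≠ 0) :
    logDigitGap (2 * m + 1) = logDigitGap m - 1 := by
  have hlog : Nat.log 2 (2 * m + 1) = Nat.log 2 m + 1 := by
    have := Nat.pow_log_le_self 2 hm
    have := Nat.lt_pow_succ_log_self one_lt_two m
    exact Nat.log_eq_of_pow_le_of_lt_pow (by rw [pow_succ]; omega)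
      (by rw [pow_succ, pow_succ] at *; omega)
  have hdigits : digits 2 (2 * m + 1) = 1 :: digits 2 m := by
    simpa [add_comm] using digits_add 2 one_lt_two 1 m one_lt_two (Or.inl one_ne_zero)
  simp only [logDigitGap, hlog, hdigits, List.sum_cons]
  push_cast
  ring

lemma prod_f_two_mul_pow_four (m : ℕ) :
    (∏ r ∈ Icc 1 (2 * m), f r) ^ 4 =
      (∏ r ∈ Icc 1 m, f r) ^ 4 * (centralBinom m : ℚ) ^ 4 * 2 ^ (-(4 * (digits 2 m).sum : ℤ)) := by
  rw [zpow_neg, eq_mul_inv_iff_mul_eq₀ (by positivity), ← mul_pow, ← prod_f_two_mul,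
    show (4 * (digits 2 m).sum : ℤ) = ((4 * (digits 2 m).sum : ℕ) : ℤ) by push_cast; rfl,
    zpow_natCast, mul_comm 4, pow_mul, mul_pow]

lemma prod_f_pow_four_le_two_mul {m : ℕ} (hm : m ≠ 0)
    (ih : (∏ r ∈ Icc 1 m, f r) ^ 4 ≤ (2 : ℚ) ^ (8 * m - slack m)) :
    (∏ r ∈ Icc 1 (2 * m), f r) ^ 4 ≤ (2 : ℚ) ^ (8 * (2 * m : ℕ) - slack (2 * m)) := by
  have hlog : 2 ^ (Nat.log 2 m + 1) ≤ 2 * m + 1 := by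
    have := Nat.pow_log_le_self 2 hm; rw [pow_succ]; omega
  set L := Nat.log 2 m
  set s := (digits 2 m).sum
  have hbinom : (centralBinom m : ℚ) ^ 4 ≤ 2 ^ (8 * m - (2 * L + 2) : ℤ) := by
    have hnat : centralBinom m ^ 4 * 2 ^ (2 * L + 2) ≤ 2 ^ (8 * m) := by
      calc centralBinom m ^ 4 * 2 ^ (2 * L + 2) = centralBinom m ^ 4 * (2 ^ (L + 1)) ^ 2 := by ring
        _ ≤ centralBinom m ^ 4 * (2 * m + 1) ^ 2 := by gcongr
        _ = ((2 * m + 1) * centralBinom m ^ 2) ^ 2 := by ring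
        _ ≤ (16 ^ m) ^ 2 := by gcongr; exact two_mul_add_one_mul_centralBinom_sq_le m
        _ = 2 ^ (8 * m) := by rw [← pow_mul, show 16 = 2 ^ 4 by rfl, ← pow_mul]; ring
    rw [zpow_sub₀ two_ne_zero, le_div_iff₀ (by positivity)]
    exact_mod_cast hnat
  have hu : logDigitGap m = L - 2 * s := rfl
  have hs : (1 : ℤ) ≤ s := by exact_mod_cast one_le_digits_two_sum hm
  calc (∏ r ∈ Icc 1 (2 * m), f r) ^ 4
      = (∏ r ∈ Icc 1 m, f r) ^ 4 * (centralBinom m : ℚ) ^ 4 * 2 ^ (-(4 * s : ℤ)) :=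
        prod_f_two_mul_pow_four m
    _ ≤ 2 ^ (8 * m - slack m) * 2 ^ (8 * m - (2 * L + 2) : ℤ) * 2 ^ (-(4 * s : ℤ)) := by
        gcongr
    _ = 2 ^ (16 * m - slack m - 2 * L - 2 - 4 * s : ℤ) := by
        rw [← zpow_add₀ two_ne_zero, ← zpow_add₀ two_ne_zero]; ring_nf
    _ ≤ 2 ^ (8 * (2 * m : ℕ) - slack (2 * m)) := by
        refine zpow_le_zpow_right₀ one_le_two ?_
        simp only [slack, logDigitGap_two_mul hm, hu, Nat.cast_mul, Nat.cast_ofNat]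
        nlinarith

lemma prod_f_pow_four_le_two_mul_add_one {m : ℕ} (hm : m ≠ 0)
    (ih : (∏ r ∈ Icc 1 m, f r) ^ 4 ≤ (2 : ℚ) ^ (8 * m - slack m)) :
    (∏ r ∈ Icc 1 (2 * m + 1), f r) ^ 4 ≤ (2 : ℚ) ^ (8 * (2 * m + 1 : ℕ) - slack (2 * m + 1)) := by
  have hlog : 2 * m + 1 ≤ 2 ^ (Nat.log 2 m + 2) := by
    have := Nat.lt_pow_succ_log_self one_lt_two m; rw [pow_succ] at *; omega
  set L := Nat.log 2 m
  set s := (digits 2 m).sum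
  have hbinom : ((2 * m + 1 : ℚ) * centralBinom m) ^ 4 ≤ 2 ^ (8 * m + 2 * L + 4 : ℤ) := by
    have hnat : ((2 * m + 1) * centralBinom m) ^ 4 ≤ 2 ^ (8 * m + 2 * L + 4) := by
      calc ((2 * m + 1) * centralBinom m) ^ 4
          = ((2 * m + 1) * centralBinom m ^ 2) ^ 2 * (2 * m + 1) ^ 2 := by ring
        _ ≤ (16 ^ m) ^ 2 * (2 ^ (L + 2)) ^ 2 := by
          gcongr; exact two_mul_add_one_mul_centralBinom_sq_le m
        _ = 2 ^ (8 * m + 2 * L + 4) := by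
          rw [show 16 = 2 ^ 4 by rfl, ← pow_mul, ← pow_mul, ← pow_mul, ← pow_add]; ring_nf
    exact_mod_cast hnat
  have hu : logDigitGap m = L - 2 * s := rfl
  calc (∏ r ∈ Icc 1 (2 * m + 1), f r) ^ 4
      = (∏ r ∈ Icc 1 m, f r) ^ 4 * ((2 * m + 1 : ℚ) * centralBinom m) ^ 4
          * 2 ^ (-(4 * s : ℤ)) := by
        rw [prod_Icc_succ_top (by omega), f_two_mul_add_one, mul_pow, prod_f_two_mul_pow_four]
        ring
    _ ≤ 2 ^ (8 * m - slack m) * 2 ^ (8 * m + 2 * L + 4 : ℤ) * 2 ^ (-(4 * s : ℤ)) := by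
        gcongr
    _ = 2 ^ (16 * m - slack m + 2 * L + 4 - 4 * s : ℤ) := by
        rw [← zpow_add₀ two_ne_zero, ← zpow_add₀ two_ne_zero]; ring_nf
    _ ≤ 2 ^ (8 * (2 * m + 1 : ℕ) - slack (2 * m + 1)) := by
        refine zpow_le_zpow_right₀ one_le_two ?_
        simp only [slack, logDigitGap_two_mul_add_one hm, hu]
        push_cast
        nlinarith

lemma prod_f_pow_four_le {n : ℕ} (hn : n ≠ 0) :
    (∏ r ∈ Icc 1 n, f r) ^ 4 ≤ (2 : ℚ) ^ (8 * n - slack n) := by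
  induction n using Nat.strong_induction_on with
  | _ n ih =>
    obtain ⟨m, rfl | rfl⟩ := Nat.even_or_odd' n
    · have hm : m ≠ 0 := by omega
      exact prod_f_pow_four_le_two_mul hm (ih m (by omega) hm)
    · rcases eq_or_ne m 0 with rfl | hm
      · norm_num [slack, logDigitGap, f_eq_zpow]
      · exact prod_f_pow_four_le_two_mul_add_one hm (ih m (by omega) hm)

lemma prod_f_le_four_pow (n : ℕ) : ∏ r ∈ Icc 1 n, f r ≤ 4 ^ n := by
  rcases eq_or_ne n 0 with rfl | hn
  · simp
  refine (pow_le_pow_iff_left₀ (prod_nonneg fun r _ ↦ f_nonneg r) (by positivity)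
    four_ne_zero).mp ?_
  calc (∏ r ∈ Icc 1 n, f r) ^ 4 ≤ (2 : ℚ) ^ (8 * n - slack n) := prod_f_pow_four_le hn
    _ ≤ 2 ^ (8 * n : ℤ) := zpow_le_zpow_right₀ one_le_two (by linarith [slack_pos n])
    _ = (4 ^ n) ^ 4 := by
        rw [show (8 * n : ℤ) = ((8 * n : ℕ) : ℤ) by push_cast; rfl, zpow_natCast]
        rw [show (4 : ℚ) = 2 ^ 2 by norm_num, ← pow_mul, ← pow_mul]; ring_nf

lemma g_natCast_div (r : ℕ) {d : ℕ} (hd : d ≠ 0) :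
    g ((r : ℚ) / d) = ((if d ∣ r then r / d else 1 : ℕ) : ℚ) := by
  simp only [g, Rat.den_div_natCast_eq_one_iff r d hd]
  split_ifs with hdvd
  · exact (Nat.cast_div hdvd (by exact_mod_cast hd)).symm
  · rfl

lemma prod_Icc_ite_dvd_div (N d : ℕ) :
    ∏ r ∈ Icc 1 N, (if d ∣ r then r / d else 1) = (N / d)! := by
  induction N with
  | zero => simp
  | succ N ih =>
    rw [prod_Icc_succ_top (by omega), ih, Nat.succ_div]
    split_ifs <;> simp [Nat.factorial_succ, mul_comm]

lemma h_mul_prod_ite_dvd_div {r K : ℕ} (hr : r ≠ 0) (hrK : r ≤ K) :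
    h r * ∏ i ∈ Icc 1 K, ((if 2 ^ i ∣ r then r / 2 ^ i else 1 : ℕ) : ℚ) = r := by
  have hg (i : ℕ) : g ((r : ℚ) / 2 ^ i) = ((if 2 ^ i ∣ r then r / 2 ^ i else 1 : ℕ) : ℚ) := by
    exact_mod_cast g_natCast_div r (pow_ne_zero i two_ne_zero)
  have hK : ∏ i ∈ Icc 1 r, g ((r : ℚ) / 2 ^ i)
      = ∏ i ∈ Icc 1 K, ((if 2 ^ i ∣ r then r / 2 ^ i else 1 : ℕ) : ℚ) := by
    simp_rw [hg]
    refine prod_subset (Icc_subset_Icc_right hrK) fun i hiK hir ↦ ?_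
    have hri : r < i := by simp only [mem_Icc] at hiK hir; omega
    rw [if_neg (Nat.not_dvd_of_pos_of_lt (by omega) (hri.trans Nat.lt_two_pow_self)), Nat.cast_one]
  rw [h, hK, div_mul_cancel₀]
  refine prod_ne_zero_iff.mpr fun i _ ↦ Nat.cast_ne_zero.mpr ?_
  split_ifs with hdvd
  · exact Nat.div_ne_zero_iff.mpr ⟨by positivity, Nat.le_of_dvd (by omega) hdvd⟩
  · exact one_ne_zero

lemma prod_h_mul_prod_factorial (N : ℕ) :
    (∏ r ∈ Icc 1 N, h r) * ∏ i ∈ Icc 1 N, ((N / 2 ^ i)! : ℚ) = N ! := by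
  simp_rw [← prod_Icc_ite_dvd_div N, Nat.cast_prod]
  rw [prod_comm, ← prod_mul_distrib]
  rw [prod_congr rfl fun r hr ↦ h_mul_prod_ite_dvd_div (by simp at hr; omega) (mem_Icc.mp hr).2]
  rw [← prod_Ico_id_eq_factorial, Ico_add_one_right_eq_Icc, Nat.cast_prod]

lemma four_pow_le_prod_h : (4 : ℚ) ^ 1023 ≤ ∏ r ∈ Icc 1 1023, h r := by
  have hnum : 4 ^ 1023 * ∏ i ∈ Icc 1 1023, (1023 / 2 ^ i)! ≤ 1023 ! := by decide +kernel
  have hpos : (0 : ℚ) < ∏ i ∈ Icc 1 1023, ((1023 / 2 ^ i)! : ℚ) := by positivity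
  rw [← mul_le_mul_iff_left₀ hpos, prod_h_mul_prod_factorial]
  exact_mod_cast hnum

theorem prod_f_le_c_pow_general (n : ℕ) :
    (∏ r ∈ Finset.Icc 1 n, f r) ^ 1023 ≤ (∏ r ∈ Finset.Icc 1 1023, h r) ^ n := by
  calc (∏ r ∈ Icc 1 n, f r) ^ 1023 ≤ ((4 : ℚ) ^ n) ^ 1023 :=
        pow_le_pow_left₀ (prod_nonneg fun r _ ↦ f_nonneg r) (prod_f_le_four_pow n) 1023
    _ = ((4 : ℚ) ^ 1023) ^ n := by rw [← pow_mul, ← pow_mul, mul_comm]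
    _ ≤ (∏ r ∈ Icc 1 1023, h r) ^ n := pow_le_pow_left₀ (by positivity) four_pow_le_prod_h n

theorem prod_f_le_c_pow (n : ℕ) (hn : 0 < n) :
    (∏ r ∈ Finset.Icc 1 n, f r) ^ 1023 ≤ (∏ r ∈ Finset.Icc 1 1023, h r) ^ n :=
  prod_f_le_c_pow_general n
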